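/- Let (V, μ, α) be a Hom-associative algebra over a field K and define the commutator bracket [x,y] := μ(x,y) − μ(y,x). Then (V, [·,·], α) is a Hom-Lie algebra: the bracket is skew-symmetric, [x,y] = −[y,x], and satisfies the Hom-Jacobi identity [α(x),[y,z]] + [α(y),[z,x]] + [α(z),[x,y]] = 0 for all x, y, z ∈ V. -/

import Mathlib

/-!
The cyclic sum in the Hom-Jacobi identity for the commutator bracket expands into the
alternating sum, over all permutations of `x, y, z`, of the Hom-associator
`μ (α a) (μ b c) - μ (μ a b) (α c)`; Hom-associativity says that every such term vanishes.
-/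

/-- The commutator bracket of a bilinear multiplication. -/
def commBr {K V : Type*} [Field K] [AddCommGroup V] [Module K V]
    (μ : V →ₗ[K] V →ₗ[K] V) (x y : V) : V :=
  μ x y - μ y x

section HomAssociator

variable {K V : Type*} [Field K] [AddCommGroup V] [Module K V]
  (μ : V →ₗ[K] V →ₗ[K] V) (α : V →ₗ[K] V)

def homAssociator (x y z : V) : V :=
  μ (α x) (μ y z) - μ (μ x y) (α z)

theorem commBr_skew (x y : V) : commBr μ x y = -commBr μ y x := by
  rw [commBr, commBr, neg_sub]

theorem commBr_homJacobi_eq_alternating_sum_homAssociator (x y z : V) :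
    commBr μ (α x) (commBr μ y z) + commBr μ (α y) (commBr μ z x)
        + commBr μ (α z) (commBr μ x y) =
      homAssociator μ α x y z - homAssociator μ α x z y
        + homAssociator μ α y z x - homAssociator μ α y x z
        + homAssociator μ α z x y - homAssociator μ α z y x := by
  simp only [commBr, homAssociator, map_sub, LinearMap.sub_apply]
  abel

end HomAssociator

/-- the commutator bracket of a Hom-associative algebra (V, μ, α) makes
(V, [·,·], α) a Hom-Lie algebra: it is skew-symmetric and satisfies the Hom-Jacobi
identity. -/
theorem stmt4 {K V : Type*} [Field K] [AddCommGroup V] [Module K V]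
    (μ : V →ₗ[K] V →ₗ[K] V) (α : V →ₗ[K] V)
    (hassoc : ∀ x y z : V, μ (α x) (μ y z) = μ (μ x y) (α z)) :
    (∀ x y : V, commBr μ x y = -commBr μ y x) ∧
    (∀ x y z : V,
      commBr μ (α x) (commBr μ y z) + commBr μ (α y) (commBr μ z x)
        + commBr μ (α z) (commBr μ x y) = 0) := by
  have homAssociator_eq_zero : ∀ x y z : V, homAssociator μ α x y z = 0 :=
    fun x y z => sub_eq_zero.mpr (hassoc x y z)
  refine ⟨commBr_skew μ, fun x y z => ?_⟩
  rw [commBr_homJacobi_eq_alternating_sum_homAssociator]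
  simp only [homAssociator_eq_zero, sub_zero, add_zero]
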